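/- For every integer n ≥ 0 with n ≡ 0 (mod 3), the octonion product satisfies 49·(jO_n · JO_n) = (99 − 520·2^n − 349488·4^n)·e_0 + (2^{2n+6} − 7842·2^n + 36)·e_1 + (2^{2n+7} + 374·2^n − 12)·e_2 + (2^{2n+8} − 4936·2^n − 24)·e_3 + (2^{2n+9} − 3390·2^n + 36)·e_4 + (2^{2n+10} − 1110·2^n − 12)·e_5 + (2^{2n+11} − 5944·2^n − 24)·e_6 + (2^{2n+12} + 3414·2^n + 36)·e_7. -/

import Mathlib

open Quaternion

noncomputable section

/-- The octonions, built from pairs of quaternions via the Cayley–Dickson construction. -/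
def Octonion : Type := ℍ[ℝ] × ℍ[ℝ]

namespace Octonion

instance : AddCommGroup Octonion := inferInstanceAs (AddCommGroup (ℍ[ℝ] × ℍ[ℝ]))
instance : Module ℝ Octonion := inferInstanceAs (Module ℝ (ℍ[ℝ] × ℍ[ℝ]))

instance : One Octonion := ⟨((1, 0) : ℍ[ℝ] × ℍ[ℝ])⟩

/-- Cayley–Dickson multiplication `(a,b)·(c,d) = (ac - d̄b, da + bc̄)`; this realizes the
standard octonion multiplication table (`e₁e₂ = e₃`, `e₁e₄ = e₅`, `e₂e₄ = e₆`,
`e₃e₄ = e₇`, `eₛ² = -1` for `1 ≤ s ≤ 7`, …). -/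
instance : Mul Octonion :=
  ⟨fun p q =>
    ((p : ℍ[ℝ] × ℍ[ℝ]).1 * (q : ℍ[ℝ] × ℍ[ℝ]).1
        - star (q : ℍ[ℝ] × ℍ[ℝ]).2 * (p : ℍ[ℝ] × ℍ[ℝ]).2,
      (q : ℍ[ℝ] × ℍ[ℝ]).2 * (p : ℍ[ℝ] × ℍ[ℝ]).1
        + (p : ℍ[ℝ] × ℍ[ℝ]).2 * star (q : ℍ[ℝ] × ℍ[ℝ]).1)⟩

/-- The standard basis `e₀ = 1, e₁, …, e₇` of the octonions. -/
def e : Fin 8 → Octonion :=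
  ![((1, 0) : ℍ[ℝ] × ℍ[ℝ]),
    ((⟨0, 1, 0, 0⟩, 0) : ℍ[ℝ] × ℍ[ℝ]),
    ((⟨0, 0, 1, 0⟩, 0) : ℍ[ℝ] × ℍ[ℝ]),
    ((⟨0, 0, 0, 1⟩, 0) : ℍ[ℝ] × ℍ[ℝ]),
    ((0, 1) : ℍ[ℝ] × ℍ[ℝ]),
    ((0, ⟨0, 1, 0, 0⟩) : ℍ[ℝ] × ℍ[ℝ]),
    ((0, ⟨0, 0, 1, 0⟩) : ℍ[ℝ] × ℍ[ℝ]),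
    ((0, ⟨0, 0, 0, 1⟩) : ℍ[ℝ] × ℍ[ℝ])]

end Octonion

/-- The third order Jacobsthal numbers: `J₀ = 0`, `J₁ = 1`, `J₂ = 1`,
`J_{n+3} = J_{n+2} + J_{n+1} + 2·J_n`. -/
def J3 : ℕ → ℕ
  | 0 => 0
  | 1 => 1
  | 2 => 1
  | n + 3 => J3 (n + 2) + J3 (n + 1) + 2 * J3 n

/-- The third order Jacobsthal–Lucas numbers: `j₀ = 2`, `j₁ = 1`, `j₂ = 5`,
`j_{n+3} = j_{n+2} + j_{n+1} + 2·j_n`. -/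
def j3 : ℕ → ℕ
  | 0 => 2
  | 1 => 1
  | 2 => 5
  | n + 3 => j3 (n + 2) + j3 (n + 1) + 2 * j3 n

/-- The `n`-th third order Jacobsthal octonion `JO_n = ∑_{s=0}^{7} J_{n+s} e_s`. -/
def JO (n : ℕ) : Octonion :=
  ∑ s : Fin 8, (J3 (n + (s : ℕ)) : ℝ) • Octonion.e s

/-- The `n`-th third order Jacobsthal–Lucas octonion `jO_n = ∑_{s=0}^{7} j_{n+s} e_s`. -/
def jO (n : ℕ) : Octonion :=
  ∑ s : Fin 8, (j3 (n + (s : ℕ)) : ℝ) • Octonion.e s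

/-
The characteristic polynomial of both recurrences is `X³ - X² - X - 2 = (X - 2)(X² + X + 1)`, so
every solution is `a·2ⁿ` plus a 3-periodic sequence whose values over a period sum to zero:
`7 J_n = 2^{n+1} - (2, -3, 1)_{n mod 3}` and `7 j_n = 2^{n+3} + (6, -9, 3)_{n mod 3}`. For
`3 ∣ n` all sixteen coefficients of `jO_n` and `JO_n` are therefore affine in `2ⁿ`, and the
identity is a polynomial identity in `2ⁿ` once the product is expanded in the Cayley–Dickson
multiplication table.
-/

open Fin.NatCast

section Recurrence

variable {R : Type*} [CommRing R]

variable (R) in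
def jacobsthalRec : LinearRecurrence R := ⟨3, ![2, 1, 1]⟩

lemma jacobsthalRec_isSolution_iff (u : ℕ → R) :
    (jacobsthalRec R).IsSolution u ↔ ∀ n, u (n + 3) = u (n + 2) + u (n + 1) + 2 * u n := by
  refine forall_congr' fun n => ?_
  change u (n + 3) = ∑ i : Fin 3, ![2, 1, 1] i * u (n + i) ↔ _
  simp [Fin.sum_univ_three]
  ring_nf

lemma jacobsthalRec_isSolution_two_pow_add_periodic (a : R) (c : Fin 3 → R)
    (hc : ∑ i, c i = 0) : (jacobsthalRec R).IsSolution fun n => a * 2 ^ n + c n := by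
  rw [jacobsthalRec_isSolution_iff]
  intro n
  have hcycle : c n + c (n + 1) + c (n + 2) = 0 := by
    rw [Fin.sum_univ_three] at hc
    generalize (n : Fin 3) = m
    fin_cases m <;> simp <;> linear_combination hc
  push_cast
  simp only [add_zero]
  linear_combination -hcycle

lemma jacobsthalRec_eq_of_init {u v : ℕ → R} (hu : (jacobsthalRec R).IsSolution u)
    (hv : (jacobsthalRec R).IsSolution v) (h0 : u 0 = v 0) (h1 : u 1 = v 1) (h2 : u 2 = v 2) :
    u = v := by
  refine ((jacobsthalRec R).eq_iff_eqOn_range_order u v hu hv).2 fun m hm => ?_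
  obtain rfl | rfl | rfl : m = 0 ∨ m = 1 ∨ m = 2 := by simp [jacobsthalRec] at hm; omega
  exacts [h0, h1, h2]

lemma seven_mul_J3 (n : ℕ) : 7 * (J3 n : R) = 2 * 2 ^ n + ![-2, 3, -1] n := by
  have hJ : (jacobsthalRec R).IsSolution fun n => 7 * (J3 n : R) :=
    (jacobsthalRec_isSolution_iff _).2 fun n => by simp only [J3]; push_cast; ring
  refine congrFun (jacobsthalRec_eq_of_init hJ
    (jacobsthalRec_isSolution_two_pow_add_periodic 2 ![-2, 3, -1] ?_) ?_ ?_ ?_) n <;>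
    norm_num [J3, Fin.sum_univ_three, Matrix.cons_val_two]

lemma seven_mul_j3 (n : ℕ) : 7 * (j3 n : R) = 8 * 2 ^ n + ![6, -9, 3] n := by
  have hj : (jacobsthalRec R).IsSolution fun n => 7 * (j3 n : R) :=
    (jacobsthalRec_isSolution_iff _).2 fun n => by simp only [j3]; push_cast; ring
  refine congrFun (jacobsthalRec_eq_of_init hj
    (jacobsthalRec_isSolution_two_pow_add_periodic 8 ![6, -9, 3] ?_) ?_ ?_ ?_) n <;>
    norm_num [j3, Fin.sum_univ_three, Matrix.cons_val_two]

end Recurrence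

namespace Octonion

def coords : Octonion →ₗ[ℝ] Fin 8 → ℝ where
  toFun p :=
    let x : ℍ[ℝ] × ℍ[ℝ] := p
    ![x.1.re, x.1.imI, x.1.imJ, x.1.imK, x.2.re, x.2.imI, x.2.imJ, x.2.imK]
  map_add' p q := by ext i; fin_cases i <;> rfl
  map_smul' r p := by ext i; fin_cases i <;> rfl

lemma coords_injective : Function.Injective coords := by
  intro p q h
  have h' := congrFun h
  refine Prod.ext (Quaternion.ext _ _ ?_ ?_ ?_ ?_) (Quaternion.ext _ _ ?_ ?_ ?_ ?_)
  exacts [h' 0, h' 1, h' 2, h' 3, h' 4, h' 5, h' 6, h' 7]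

lemma coords_e (s : Fin 8) : coords (e s) = Pi.single s 1 := by
  fin_cases s <;> ext i <;> fin_cases i <;> rfl

lemma coords_sum_smul_e (c : Fin 8 → ℝ) : coords (∑ s, c s • e s) = c := by
  ext i
  simp [map_sum, coords_e, Finset.sum_apply, Pi.single_apply]

lemma fst_mul (p q : Octonion) :
    ((p * q : Octonion) : ℍ[ℝ] × ℍ[ℝ]).1 =
      (p : ℍ[ℝ] × ℍ[ℝ]).1 * (q : ℍ[ℝ] × ℍ[ℝ]).1 - star (q : ℍ[ℝ] × ℍ[ℝ]).2 * (p : ℍ[ℝ] × ℍ[ℝ]).2 :=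
  rfl

lemma snd_mul (p q : Octonion) :
    ((p * q : Octonion) : ℍ[ℝ] × ℍ[ℝ]).2 =
      (q : ℍ[ℝ] × ℍ[ℝ]).2 * (p : ℍ[ℝ] × ℍ[ℝ]).1 + (p : ℍ[ℝ] × ℍ[ℝ]).2 * star (q : ℍ[ℝ] × ℍ[ℝ]).1 :=
  rfl

lemma coords_mul (p q : Octonion) :
    coords (p * q) =
      let a := coords p
      let b := coords q
      ![a 0 * b 0 - a 1 * b 1 - a 2 * b 2 - a 3 * b 3 - a 4 * b 4 - a 5 * b 5 - a 6 * b 6 - a 7 * b 7,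
        a 0 * b 1 + a 1 * b 0 + a 2 * b 3 - a 3 * b 2 + a 4 * b 5 - a 5 * b 4 - a 6 * b 7 + a 7 * b 6,
        a 0 * b 2 - a 1 * b 3 + a 2 * b 0 + a 3 * b 1 + a 4 * b 6 + a 5 * b 7 - a 6 * b 4 - a 7 * b 5,
        a 0 * b 3 + a 1 * b 2 - a 2 * b 1 + a 3 * b 0 + a 4 * b 7 - a 5 * b 6 + a 6 * b 5 - a 7 * b 4,
        a 0 * b 4 - a 1 * b 5 - a 2 * b 6 - a 3 * b 7 + a 4 * b 0 + a 5 * b 1 + a 6 * b 2 + a 7 * b 3,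
        a 0 * b 5 + a 1 * b 4 - a 2 * b 7 + a 3 * b 6 - a 4 * b 1 + a 5 * b 0 - a 6 * b 3 + a 7 * b 2,
        a 0 * b 6 + a 1 * b 7 + a 2 * b 4 - a 3 * b 5 - a 4 * b 2 + a 5 * b 3 + a 6 * b 0 - a 7 * b 1,
        a 0 * b 7 - a 1 * b 6 + a 2 * b 5 + a 3 * b 4 - a 4 * b 3 - a 5 * b 2 + a 6 * b 1 + a 7 * b 0] := by
  ext i
  fin_cases i <;> simp [coords, fst_mul, snd_mul] <;> ring

lemma smul_e_add_eq_sum (c₀ c₁ c₂ c₃ c₄ c₅ c₆ c₇ : ℝ) :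
    c₀ • e 0 + c₁ • e 1 + c₂ • e 2 + c₃ • e 3 + c₄ • e 4 + c₅ • e 5 + c₆ • e 6 + c₇ • e 7 =
      ∑ s, ![c₀, c₁, c₂, c₃, c₄, c₅, c₆, c₇] s • e s := by
  simp [Fin.sum_univ_eight]

end Octonion

open Octonion in
theorem jO_mul_JO (n : ℕ) (h : n % 3 = 0) :
    (49 : ℝ) • (jO n * JO n) =
      ((99 : ℝ) - 520 * 2 ^ n - 349488 * 4 ^ n) • e 0
      + ((2 : ℝ) ^ (2 * n + 6) - 7842 * 2 ^ n + 36) • e 1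
      + ((2 : ℝ) ^ (2 * n + 7) + 374 * 2 ^ n - 12) • e 2
      + ((2 : ℝ) ^ (2 * n + 8) - 4936 * 2 ^ n - 24) • e 3
      + ((2 : ℝ) ^ (2 * n + 9) - 3390 * 2 ^ n + 36) • e 4
      + ((2 : ℝ) ^ (2 * n + 10) - 1110 * 2 ^ n - 12) • e 5
      + ((2 : ℝ) ^ (2 * n + 11) - 5944 * 2 ^ n - 24) • e 6
      + ((2 : ℝ) ^ (2 * n + 12) + 3414 * 2 ^ n + 36) • e 7 := by
  have hn : (n : Fin 3) = 0 := Fin.natCast_eq_zero.2 (Nat.dvd_of_mod_eq_zero h)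
  have hJ (s : ℕ) : (J3 (n + s) : ℝ) = (2 * 2 ^ n * 2 ^ s + ![-2, 3, -1] (s : Fin 3)) / 7 := by
    rw [eq_div_iff (by norm_num), mul_comm, seven_mul_J3, Nat.cast_add, hn, zero_add, pow_add]
    ring
  have hj (s : ℕ) : (j3 (n + s) : ℝ) = (8 * 2 ^ n * 2 ^ s + ![6, -9, 3] (s : Fin 3)) / 7 := by
    rw [eq_div_iff (by norm_num), mul_comm, seven_mul_j3, Nat.cast_add, hn, zero_add, pow_add]
    ring
  have h4 : (4 : ℝ) ^ n = 2 ^ n * 2 ^ n := by rw [← mul_pow]; norm_num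
  apply coords_injective
  simp only [smul_e_add_eq_sum, map_smul, coords_mul, jO, JO, hJ, hj, coords_sum_smul_e]
  ext i
  fin_cases i <;> simp [h4] <;> ring

end
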